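/- arXiv:1910.13821 — 2 statements merged into one kernel-verified Lean document; each statement's English description precedes it below -/
import Mathlib

section
/- Suppose q(r) = Λ^H G a(r) satisfies q(r_j) = φ_j for r_j ∈ S and ‖q(r)‖₂ < 1 strictly for r ∉ S. If X̂ = ∑_{r_j ∈ Ŝ} ĉ_j a(r_j) φ̂_j^H with ĉ_j > 0, ‖φ̂_j‖₂ = 1, satisfies G X̂ = G X and Ŝ ⊄ S (i.e., Ŝ contains a point not in S), then ∑_j ĉ_j > ‖X‖_A, where ‖X‖_A = ∑_{r_j∈S} c_j. -/
open Finset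

/-- The atom `a(r) φᴴ ∈ ℂ^{n×R}`. -/
noncomputable def atomMatrix {n R : ℕ} (a : ℝ × ℝ → Fin n → ℂ) (r : ℝ × ℝ)
    (φ : EuclideanSpace ℂ (Fin R)) : Matrix (Fin n) (Fin R) ℂ :=
  Matrix.of fun i k => a r i * star (φ k)

/-! Pairing with the dual certificate, `Y ↦ Re tr(Λᴴ Y)`, sends `G (a(ρ) ψᴴ)` to `Re ⟪ψ, q(ρ)⟫`.
Applied to `G X' = G X` it gives `∑ c_j = ∑ c'_j Re ⟪φ'_j, q(r'_j)⟫` by interpolation, and by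
Cauchy–Schwarz each `Re ⟪φ'_j, q(r'_j)⟫ ≤ ‖q(r'_j)‖ ≤ 1`, strictly at an atom off `S`. -/

open Matrix

theorem atomMatrix_eq_vecMulVec {n R : ℕ} (a : ℝ × ℝ → Fin n → ℂ) (ρ : ℝ × ℝ)
    (ψ : EuclideanSpace ℂ (Fin R)) : atomMatrix a ρ ψ = vecMulVec (a ρ) (star ⇑ψ) :=
  rfl

theorem trace_conjTranspose_mul_mul_atomMatrix {l : Type*} [Fintype l] {n R : ℕ}
    (a : ℝ × ℝ → Fin n → ℂ) (G : Matrix l (Fin n) ℂ) (Λ : Matrix l (Fin R) ℂ) (ρ : ℝ × ℝ)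
    (ψ v : EuclideanSpace ℂ (Fin R)) (hv : ⇑v = Λᴴ *ᵥ G *ᵥ a ρ) :
    (Λᴴ * (G * atomMatrix a ρ ψ)).trace = inner ℂ ψ v := by
  rw [atomMatrix_eq_vecMulVec, mul_vecMulVec, mul_vecMulVec, trace_vecMulVec, ← hv,
    PiLp.inner_apply, dotProduct]
  exact sum_congr rfl fun k _ => (RCLike.inner_apply _ _).symm

theorem re_trace_conjTranspose_mul_mul_sum_atomMatrix {l ι : Type*} [Fintype l] [Fintype ι]
    {n R : ℕ} (a : ℝ × ℝ → Fin n → ℂ) (G : Matrix l (Fin n) ℂ) (Λ : Matrix l (Fin R) ℂ)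
    (q : ℝ × ℝ → EuclideanSpace ℂ (Fin R)) (hq : ∀ ρ, ⇑(q ρ) = Λᴴ *ᵥ G *ᵥ a ρ)
    (c : ι → ℝ) (r : ι → ℝ × ℝ) (φ : ι → EuclideanSpace ℂ (Fin R)) :
    (Λᴴ * (G * ∑ j, (c j : ℂ) • atomMatrix a (r j) (φ j))).trace.re
      = ∑ j, c j * (inner ℂ (φ j) (q (r j))).re := by
  simp only [Matrix.mul_sum, Matrix.mul_smul, trace_sum, trace_smul, smul_eq_mul,
    trace_conjTranspose_mul_mul_atomMatrix a G Λ _ _ _ (hq _), Complex.re_sum,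
    Complex.re_ofReal_mul]

theorem sum_mul_re_inner_lt_sum {E ι : Type*} [NormedAddCommGroup E] [InnerProductSpace ℂ E]
    [Fintype ι] (c : ι → ℝ) (φ v : ι → E) (hc : ∀ j, 0 < c j) (hφ : ∀ j, ‖φ j‖ = 1)
    (hv : ∀ j, ‖v j‖ ≤ 1) (j₀ : ι) (hj₀ : ‖v j₀‖ < 1) :
    ∑ j, c j * (inner ℂ (φ j) (v j)).re < ∑ j, c j := by
  have hre : ∀ j, (inner ℂ (φ j) (v j)).re ≤ ‖v j‖ := fun j => by
    simpa [hφ j] using re_inner_le_norm (𝕜 := ℂ) (φ j) (v j)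
  refine sum_lt_sum (fun j _ => ?_) ⟨j₀, mem_univ _, ?_⟩
  · exact mul_le_of_le_one_right (hc j).le ((hre j).trans (hv j))
  · exact mul_lt_of_lt_one_right (hc j₀) ((hre j₀).trans_lt hj₀)

theorem competing_decomposition_strictly_larger_general {L n R s s' : ℕ}
    (a : ℝ × ℝ → Fin n → ℂ) (G : Matrix (Fin L) (Fin n) ℂ)
    (Λ : Matrix (Fin L) (Fin R) ℂ)
    (c : Fin s → ℝ) (r : Fin s → ℝ × ℝ) (φ : Fin s → EuclideanSpace ℂ (Fin R))
    (hφ : ∀ j, ‖φ j‖ = 1)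
    (X : Matrix (Fin n) (Fin R) ℂ)
    (hX : X = ∑ j, (c j : ℂ) • atomMatrix a (r j) (φ j))
    (q : ℝ × ℝ → EuclideanSpace ℂ (Fin R))
    (hq : ∀ ρ, ∀ m, q ρ m = ∑ p : Fin L, star (Λ p m) * (G.mulVec (a ρ)) p)
    (hinterp : ∀ j, q (r j) = φ j)
    (hboundoff : ∀ ρ, ρ ∉ Set.range r → ‖q ρ‖ < 1)
    (c' : Fin s' → ℝ) (r' : Fin s' → ℝ × ℝ) (φ' : Fin s' → EuclideanSpace ℂ (Fin R))
    (hc' : ∀ j, 0 < c' j) (hφ' : ∀ j, ‖φ' j‖ = 1)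
    (X' : Matrix (Fin n) (Fin R) ℂ)
    (hX' : X' = ∑ j, (c' j : ℂ) • atomMatrix a (r' j) (φ' j))
    (hfeas : G * X' = G * X)
    (hoff : ∃ j, r' j ∉ Set.range r) :
    ∑ j, c j < ∑ j, c' j := by
  obtain ⟨j₀, hj₀⟩ := hoff
  have hq' : ∀ ρ, ⇑(q ρ) = Λᴴ *ᵥ G *ᵥ a ρ := fun ρ => funext (hq ρ)
  have hq_le : ∀ ρ, ‖q ρ‖ ≤ 1 := by
    intro ρ
    by_cases hρ : ρ ∈ Set.range r
    · obtain ⟨j, rfl⟩ := hρ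
      rw [hinterp, hφ]
    · exact (hboundoff ρ hρ).le
  calc ∑ j, c j = ∑ j, c j * (inner ℂ (φ j) (q (r j))).re := by
        simp [hinterp, hφ]
    _ = (Λᴴ * (G * X)).trace.re := by
        rw [hX, re_trace_conjTranspose_mul_mul_sum_atomMatrix a G Λ q hq']
    _ = ∑ j, c' j * (inner ℂ (φ' j) (q (r' j))).re := by
        rw [← hfeas, hX', re_trace_conjTranspose_mul_mul_sum_atomMatrix a G Λ q hq']
    _ < ∑ j, c' j :=
        sum_mul_re_inner_lt_sum c' φ' _ hc' hφ' (fun _ => hq_le _) j₀ (hboundoff _ hj₀)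

/-- uniqueness part of the dual certificate argument.  If the vector
dual polynomial `q(ρ) = Λᴴ G a(ρ)` interpolates the signs on `S = {r_1,…,r_s}` and is
strictly bounded by one off `S`, then any competing decomposition
`X' = ∑ c'_j a(r'_j) φ'_jᴴ` with `G X' = G X` whose support contains a point outside `S`
has strictly larger atomic cost: `∑ c'_j > ∑ c_j = ‖X‖_A`. -/
theorem competing_decomposition_strictly_larger {L n R s s' : ℕ}
    (a : ℝ × ℝ → Fin n → ℂ) (G : Matrix (Fin L) (Fin n) ℂ)
    (Λ : Matrix (Fin L) (Fin R) ℂ)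
    (c : Fin s → ℝ) (r : Fin s → ℝ × ℝ) (φ : Fin s → EuclideanSpace ℂ (Fin R))
    (hc : ∀ j, 0 < c j) (hφ : ∀ j, ‖φ j‖ = 1)
    (X : Matrix (Fin n) (Fin R) ℂ)
    (hX : X = ∑ j, (c j : ℂ) • atomMatrix a (r j) (φ j))
    (q : ℝ × ℝ → EuclideanSpace ℂ (Fin R))
    (hq : ∀ ρ, ∀ m, q ρ m = ∑ p : Fin L, star (Λ p m) * (G.mulVec (a ρ)) p)
    (hinterp : ∀ j, q (r j) = φ j)
    (hboundoff : ∀ ρ, ρ ∉ Set.range r → ‖q ρ‖ < 1)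
    (c' : Fin s' → ℝ) (r' : Fin s' → ℝ × ℝ) (φ' : Fin s' → EuclideanSpace ℂ (Fin R))
    (hc' : ∀ j, 0 < c' j) (hφ' : ∀ j, ‖φ' j‖ = 1)
    (X' : Matrix (Fin n) (Fin R) ℂ)
    (hX' : X' = ∑ j, (c' j : ℂ) • atomMatrix a (r' j) (φ' j))
    (hfeas : G * X' = G * X)
    (hoff : ∃ j, r' j ∉ Set.range r) :
    ∑ j, c j < ∑ j, c' j :=
  competing_decomposition_strictly_larger_general a G Λ c r φ hφ X hX q hq hinterp hboundoff c' r'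
    φ' hc' hφ' X' hX' hfeas hoff
end

section
/- Let p(t) = ∑_{k=-N}^{N} c_k e^{i2πkt} be a trigonometric polynomial of degree N with complex coefficients. Then for all real t, |p'(t)| ≤ 2πN sup_s |p(s)|. -/
open Real Finset

/-! M. Riesz's interpolation formula. Let `z_j = exp (iπ(2j+1)/(2N))`, `j < 2N`, be the roots of
`z ^ (2N) = -1`. The sums `S m = ∑ z_j ^ m / (z_j - 1) ^ 2` have first differences
`∑ z_j ^ m / (z_j - 1)`, which are constant (`= N`) for `1 ≤ m ≤ 2N` because the power sums
`∑ z_j ^ i` vanish for `0 < i < 2N`; and `S (m + 2N) = -S m`. Hence `S (N + 1 + k) = N k` for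
`|k| ≤ N`, i.e. the weights `w_j = z_j ^ (N + 1) / (z_j - 1) ^ 2` satisfy `∑ w_j z_j ^ k = N k`, so
`p' t = (2πi / N) ∑ w_j p (t + θ_j)` with `z_j = exp (2πi θ_j)`. On the unit circle
`-z / (z - 1) ^ 2 = 1 / |z - 1| ^ 2 > 0`, so `∑ |w_j| = -S 1 = N ^ 2`, and the triangle inequality
gives `|p' t| ≤ (2π / N) N ^ 2 sup |p|`. -/

open Complex

noncomputable def powerSumDiv (d : ℕ) (z : ℕ → ℂ) (e m : ℕ) : ℂ :=
  ∑ j ∈ range d, z j ^ m / (z j - 1) ^ e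

theorem ne_one_of_pow_eq_neg_one {w : ℂ} {n : ℕ} (h : w ^ n = -1) : w ≠ 1 := by
  rintro rfl
  norm_num at h

section PowerSumDiv

variable {d : ℕ} {z : ℕ → ℂ}

theorem powerSumDiv_succ_succ (hz : ∀ j < d, z j ≠ 1) (e m : ℕ) :
    powerSumDiv d z (e + 1) (m + 1) = powerSumDiv d z (e + 1) m + powerSumDiv d z e m := by
  simp only [powerSumDiv, ← sum_add_distrib]
  refine sum_congr rfl fun j hj => ?_
  have := sub_ne_zero.2 (hz j (mem_range.1 hj))
  field_simp
  ring

theorem powerSumDiv_add_eq_add_sum (hz : ∀ j < d, z j ≠ 1) (e m i : ℕ) :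
    powerSumDiv d z (e + 1) (m + i) =
      powerSumDiv d z (e + 1) m + ∑ l ∈ range i, powerSumDiv d z e (m + l) := by
  induction i with
  | zero => simp
  | succ i ih => rw [← add_assoc, powerSumDiv_succ_succ hz, ih, sum_range_succ, add_assoc]

theorem powerSumDiv_add_self (hpow : ∀ j < d, z j ^ d = -1) (e m : ℕ) :
    powerSumDiv d z e (m + d) = -powerSumDiv d z e m := by
  simp only [powerSumDiv, ← sum_neg_distrib]
  refine sum_congr rfl fun j hj => ?_
  rw [pow_add, hpow j (mem_range.1 hj)]
  ring

theorem powerSumDiv_one (hpow : ∀ j < d, z j ^ d = -1)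
    (hsum : ∀ i, 0 < i → i < d → ∑ j ∈ range d, z j ^ i = 0) {m : ℕ} (hm : 1 ≤ m) (hmd : m ≤ d) :
    powerSumDiv d z 1 m = d / 2 := by
  have hz : ∀ j < d, z j ≠ 1 := fun j hj => ne_one_of_pow_eq_neg_one (hpow j hj)
  have hconst : ∀ i < d, powerSumDiv d z 1 (1 + i) = powerSumDiv d z 1 1 := fun i hi => by
    rw [powerSumDiv_add_eq_add_sum hz, add_eq_left]
    refine sum_eq_zero fun l hl => ?_
    simpa [powerSumDiv] using hsum (1 + l) (by omega) (by simp at hl; omega)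
  have hstep : powerSumDiv d z 1 1 = powerSumDiv d z 1 0 + d := by
    simpa [powerSumDiv] using powerSumDiv_succ_succ hz 0 0
  have hflip : powerSumDiv d z 1 d = -powerSumDiv d z 1 0 := by
    simpa using powerSumDiv_add_self hpow 1 0
  have hlast : powerSumDiv d z 1 d = powerSumDiv d z 1 1 := by
    simpa [show 1 + (d - 1) = d by omega] using hconst (d - 1) (by omega)
  obtain ⟨i, rfl⟩ : ∃ i, m = 1 + i := ⟨m - 1, by omega⟩
  rw [hconst i (by omega)]
  linear_combination (hstep + hflip - hlast) / 2

theorem powerSumDiv_two (hpow : ∀ j < d, z j ^ d = -1)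
    (hsum : ∀ i, 0 < i → i < d → ∑ j ∈ range d, z j ^ i = 0) {i : ℕ} (hi : i ≤ d) :
    powerSumDiv d z 2 (i + 1) = d / 2 * (i - d / 2) := by
  have hz : ∀ j < d, z j ≠ 1 := fun j hj => ne_one_of_pow_eq_neg_one (hpow j hj)
  have hlin : ∀ i ≤ d, powerSumDiv d z 2 (1 + i) = powerSumDiv d z 2 1 + i * (d / 2) := by
    intro i hi
    rw [powerSumDiv_add_eq_add_sum hz, sum_congr rfl fun l hl =>
      powerSumDiv_one hpow hsum (by omega) (by simp at hl; omega)]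
    simp
  have hflip : powerSumDiv d z 2 (1 + d) = -powerSumDiv d z 2 1 :=
    powerSumDiv_add_self hpow 2 1
  rw [add_comm, hlin i hi]
  linear_combination (hflip - hlin d le_rfl) / 2

theorem sum_norm_pow_div_sub_one_sq (hpow : ∀ j < d, z j ^ d = -1)
    (hsum : ∀ i, 0 < i → i < d → ∑ j ∈ range d, z j ^ i = 0) (m : ℕ) :
    ∑ j ∈ range d, ‖z j ^ m / (z j - 1) ^ 2‖ = (d / 2) ^ 2 := by
  have hterm : ∀ j < d, ((‖z j ^ m / (z j - 1) ^ 2‖ : ℝ) : ℂ) = -(z j ^ 1 / (z j - 1) ^ 2) := by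
    intro j hj
    have hnorm : ‖z j‖ = 1 := (pow_eq_one_iff_of_nonneg (norm_nonneg _) (by omega : d ≠ 0)).1
      (by rw [← norm_pow, hpow j hj, norm_neg, norm_one])
    have hz0 : z j ≠ 0 := norm_ne_zero_iff.1 (by simp [hnorm])
    have hz1 := sub_ne_zero.2 (ne_one_of_pow_eq_neg_one (hpow j hj))
    -- on the unit circle `conj z = z⁻¹`, so `‖z - 1‖ ^ 2 = (z - 1) (z⁻¹ - 1) = -(z - 1) ^ 2 / z`
    have hsq : ((‖z j - 1‖ ^ 2 : ℝ) : ℂ) = -(z j - 1) ^ 2 / z j := by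
      rw [ofReal_pow, ← mul_conj', map_sub, map_one, ← RCLike.inv_eq_conj hnorm]
      field_simp
      ring
    rw [norm_div, norm_pow, norm_pow, hnorm, one_pow, ofReal_div, ofReal_one, hsq]
    field_simp
  apply ofReal_injective
  push_cast
  rw [sum_congr rfl fun j hj => hterm j (mem_range.1 hj), sum_neg_distrib]
  have := powerSumDiv_two hpow hsum (Nat.zero_le d)
  simp only [powerSumDiv, zero_add, Nat.cast_zero] at this
  rw [this]
  ring

end PowerSumDiv

noncomputable def rieszAngle (d j : ℕ) : ℝ := (2 * j + 1) / (2 * d)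

noncomputable def rieszNode (d j : ℕ) : ℂ := cexp (I * (2 * π * rieszAngle d j))

theorem rieszNode_pow (d j m : ℕ) :
    rieszNode d j ^ m = cexp (I * (2 * π * m * rieszAngle d j)) := by
  rw [rieszNode, ← Complex.exp_nat_mul]
  ring_nf

theorem rieszNode_pow_self {d : ℕ} (hd : d ≠ 0) (j : ℕ) : rieszNode d j ^ d = -1 := by
  rw [rieszNode_pow, rieszAngle,
    show I * (2 * π * d * ((2 * j + 1 : ℝ) / (2 * d) : ℝ)) = (2 * j + 1 : ℕ) * (π * I) by
      push_cast; field_simp,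
    Complex.exp_nat_mul, exp_pi_mul_I]
  exact Odd.neg_one_pow ⟨j, rfl⟩

theorem sum_rieszNode_pow {d i : ℕ} (hi : 0 < i) (hid : i < d) :
    ∑ j ∈ range d, rieszNode d j ^ i = 0 := by
  set ω := cexp (2 * π * I / d)
  have hω : IsPrimitiveRoot ω d := isPrimitiveRoot_exp d (by omega)
  have hterm : ∀ j, rieszNode d j ^ i = cexp (π * I * i / d) * (ω ^ i) ^ j := by
    intro j
    rw [rieszNode_pow, ← pow_mul, ← Complex.exp_nat_mul, ← Complex.exp_add, rieszAngle]
    have : (d : ℂ) ≠ 0 := by exact_mod_cast (show d ≠ 0 by omega)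
    congr 1
    push_cast
    field_simp
    ring
  have hωi : ω ^ i ≠ 1 := hω.pow_ne_one_of_pos_of_lt (by omega) hid
  rw [sum_congr rfl fun j _ => hterm j, ← mul_sum, geom_sum_eq hωi, ← pow_mul, mul_comm i d,
    pow_mul, hω.pow_eq_one]
  simp

noncomputable def rieszWeight (n j : ℕ) : ℂ :=
  rieszNode (2 * n) j ^ (n + 1) / (rieszNode (2 * n) j - 1) ^ 2

theorem sum_rieszWeight_mul_exp {n : ℕ} {k : ℤ} (hk : k ∈ Icc (-(n : ℤ)) n) :
    ∑ j ∈ range (2 * n), rieszWeight n j * cexp (I * (2 * π * k * rieszAngle (2 * n) j)) =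
      n * k := by
  obtain ⟨hk₁, hk₂⟩ := mem_Icc.1 hk
  obtain ⟨m, hm⟩ : ∃ m : ℕ, (m : ℤ) = n + k := ⟨(n + k).toNat, by omega⟩
  have hmC : (m : ℂ) = n + k := by exact_mod_cast hm
  have hterm : ∀ j, rieszWeight n j * cexp (I * (2 * π * k * rieszAngle (2 * n) j)) =
      rieszNode (2 * n) j ^ (m + 1) / (rieszNode (2 * n) j - 1) ^ 2 := by
    intro j
    rw [rieszWeight, div_mul_eq_mul_div, rieszNode_pow, rieszNode_pow, ← Complex.exp_add]
    congr 2
    push_cast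
    rw [hmC]
    ring
  have hS := powerSumDiv_two (d := 2 * n) (fun j hj => rieszNode_pow_self (by omega) j)
    (fun _ => sum_rieszNode_pow) (i := m) (by omega)
  rw [powerSumDiv] at hS
  rw [sum_congr rfl fun j _ => hterm j, hS, hmC]
  push_cast
  ring

theorem sum_norm_rieszWeight (n : ℕ) : ∑ j ∈ range (2 * n), ‖rieszWeight n j‖ = n ^ 2 := by
  simp only [rieszWeight]
  rw [sum_norm_pow_div_sub_one_sq (fun j hj => rieszNode_pow_self (by omega) j)
    (fun _ => sum_rieszNode_pow)]
  push_cast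
  ring

noncomputable def trigPoly (N : ℕ) (c : ℤ → ℂ) (s : ℝ) : ℂ :=
  ∑ k ∈ Finset.Icc (-(N : ℤ)) (N : ℤ), c k * Complex.exp (Complex.I * (2 * π * k * s))

theorem hasDerivAt_trigPoly (N : ℕ) (c : ℤ → ℂ) (t : ℝ) :
    HasDerivAt (trigPoly N c)
      (∑ k ∈ Icc (-(N : ℤ)) N, 2 * π * I * k * (c k * cexp (I * (2 * π * k * t)))) t := by
  refine HasDerivAt.fun_sum fun k _ => ?_
  have hlin : HasDerivAt (fun s : ℂ => I * (2 * π * k * s)) (2 * π * I * k) t := by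
    simpa [mul_comm, mul_left_comm, mul_assoc] using
      ((hasDerivAt_id (t : ℂ)).const_mul (2 * π * k : ℂ)).const_mul I
  exact ((hlin.cexp.const_mul (c k)).comp_ofReal).congr_deriv (by ring)

theorem norm_trigPoly_le_iSup (N : ℕ) (c : ℤ → ℂ) (t : ℝ) :
    ‖trigPoly N c t‖ ≤ ⨆ s, ‖trigPoly N c s‖ := by
  refine le_ciSup (f := fun s => ‖trigPoly N c s‖) ⟨∑ k ∈ Icc (-(N : ℤ)) N, ‖c k‖, ?_⟩ t
  rintro _ ⟨s, rfl⟩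
  refine (norm_sum_le _ _).trans (sum_le_sum fun k _ => ?_)
  rw [norm_mul, ← ofReal_ofNat, ← ofReal_intCast, ← ofReal_mul, ← ofReal_mul, ← ofReal_mul,
    mul_comm I, norm_exp_ofReal_mul_I, mul_one]

theorem trigPoly_add (N : ℕ) (c : ℤ → ℂ) (t θ : ℝ) :
    trigPoly N c (t + θ) =
      ∑ k ∈ Icc (-(N : ℤ)) N, c k * cexp (I * (2 * π * k * t)) * cexp (I * (2 * π * k * θ)) := by
  rw [trigPoly]
  refine sum_congr rfl fun k _ => ?_
  rw [mul_assoc (c k), ← Complex.exp_add]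
  congr 2
  push_cast
  ring

theorem deriv_trigPoly_eq_sum_rieszWeight (N : ℕ) (c : ℤ → ℂ) (t : ℝ) :
    deriv (trigPoly N c) t = 2 * π * I / N *
      ∑ j ∈ range (2 * N), rieszWeight N j * trigPoly N c (t + rieszAngle (2 * N) j) := by
  set e : ℤ → ℝ → ℂ := fun k s => cexp (I * (2 * π * k * s))
  calc deriv (trigPoly N c) t = ∑ k ∈ Icc (-(N : ℤ)) N, 2 * π * I * k * (c k * e k t) :=
        (hasDerivAt_trigPoly N c t).deriv
    _ = 2 * π * I / N * ∑ k ∈ Icc (-(N : ℤ)) N, c k * e k t * (N * k) := by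
        rw [mul_sum]
        refine sum_congr rfl fun k hk => ?_
        rcases eq_or_ne N 0 with rfl | hN
        · obtain rfl : k = 0 := by simp at hk; omega
          simp
        · field_simp
    _ = 2 * π * I / N * ∑ k ∈ Icc (-(N : ℤ)) N, c k * e k t *
          ∑ j ∈ range (2 * N), rieszWeight N j * e k (rieszAngle (2 * N) j) := by
        congr 1
        exact sum_congr rfl fun k hk => by rw [sum_rieszWeight_mul_exp hk]
    _ = _ := by
        simp only [trigPoly_add, mul_sum]
        rw [sum_comm]
        exact sum_congr rfl fun _ _ => sum_congr rfl fun _ _ => by ring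

/-- Bernstein's inequality for trigonometric polynomials.  If
`p(t) = ∑_{k=-N}^{N} c_k e^{i2πkt}`, then `|p'(t)| ≤ 2πN · sup_s |p(s)|`. -/
theorem bernstein_trig_poly (N : ℕ) (c : ℤ → ℂ) (t : ℝ) :
    norm (deriv (fun s : ℝ =>
        ∑ k ∈ Finset.Icc (-(N : ℤ)) (N : ℤ), c k * Complex.exp (Complex.I * (2 * π * k * s))) t) ≤
      2 * π * N * ⨆ s : ℝ, norm
        (∑ k ∈ Finset.Icc (-(N : ℤ)) (N : ℤ), c k * Complex.exp (Complex.I * (2 * π * k * s))) := by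
  change ‖deriv (trigPoly N c) t‖ ≤ 2 * π * N * ⨆ s, ‖trigPoly N c s‖
  have hfactor : ‖2 * π * I / N‖ = 2 * π / N := by simp [abs_of_pos pi_pos]
  rw [deriv_trigPoly_eq_sum_rieszWeight, norm_mul, hfactor]
  calc 2 * π / N * ‖∑ j ∈ range (2 * N), rieszWeight N j * trigPoly N c (t + rieszAngle (2 * N) j)‖
      ≤ 2 * π / N * ∑ j ∈ range (2 * N), ‖rieszWeight N j‖ * ⨆ s, ‖trigPoly N c s‖ := by
        gcongr
        refine (norm_sum_le _ _).trans (sum_le_sum fun j _ => ?_)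
        rw [norm_mul]
        gcongr
        exact norm_trigPoly_le_iSup N c _
    _ = 2 * π * ((N : ℝ)⁻¹ * N * N) * ⨆ s, ‖trigPoly N c s‖ := by
        rw [← sum_mul, sum_norm_rieszWeight]
        ring
    _ = 2 * π * N * ⨆ s, ‖trigPoly N c s‖ := by rw [inv_mul_mul_self]
end
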